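/- For every n ∈ ℕ, the set {1} ∪ {p ∈ ℙ : p ≤ n} ∪ {p² : p ∈ ℙ, p² ≤ n} is a maximum (n,2)-shelf, i.e., it is an (n,2)-shelf of maximal cardinality. -/

import Mathlib

/-!
Group the elements of a shelf `B ⊆ [1, n]` by their least prime factor. The class of `1` is
`{1}`; the class of a prime `p` lies among the multiples of `p`, so it has at most two
elements, and if it has two, one of them is not `p`, hence is composite with least prime factor
`p` and at least `p²`, so `p² ≤ n`. Class by class, `B` is thus no larger than
`{1} ∪ {p ≤ n} ∪ {p² ≤ n}`, whose class of `p` is `{p, p²} ∩ [1, n]`.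
-/

open scoped Classical

open Finset

theorem Finset.card_le_card_of_card_fiber_le {α β : Type*} [DecidableEq β] {s t : Finset α}
    {f : α → β} (h : ∀ a ∈ s, #{x ∈ s | f x = f a} ≤ #{x ∈ t | f x = f a}) : #s ≤ #t :=
  calc #s = ∑ b ∈ s.image f, #{x ∈ s | f x = b} := card_eq_sum_card_image f s
    _ ≤ ∑ b ∈ s.image f, #{x ∈ t | f x = b} := sum_le_sum <| forall_mem_image.2 h
    _ ≤ #t := (sum_card_fiberwise_eq_card_filter t _ f).trans_le (card_filter_le _ _)

noncomputable def primesAndSquares (n : ℕ) : Finset ℕ :=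
  {1} ∪ {p ∈ Icc 1 n | p.Prime} ∪ {m ∈ Icc 1 n | ∃ p : ℕ, p.Prime ∧ m = p ^ 2}

theorem mem_primesAndSquares {n m : ℕ} :
    m ∈ primesAndSquares n ↔ m = 1 ∨ (m.Prime ∨ ∃ p : ℕ, p.Prime ∧ m = p ^ 2) ∧ m ≤ n := by
  simp only [primesAndSquares, mem_union, mem_filter, mem_singleton, mem_Icc]
  constructor
  · rintro ((h | ⟨⟨-, h⟩, hp⟩) | ⟨⟨-, h⟩, hp⟩) <;> tauto
  · rintro (h | ⟨(hp | ⟨p, hp, rfl⟩), hn⟩)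
    · tauto
    · exact Or.inl (Or.inr ⟨⟨hp.one_lt.le, hn⟩, hp⟩)
    · exact Or.inr ⟨⟨Nat.one_le_pow _ _ hp.pos, hn⟩, p, hp, rfl⟩

theorem primesAndSquares_subset_Icc {n : ℕ} (hn : 1 ≤ n) : primesAndSquares n ⊆ Icc 1 n := by
  intro m hm
  rcases mem_primesAndSquares.1 hm with rfl | ⟨hp | ⟨p, hp, rfl⟩, hmn⟩
  · exact mem_Icc.2 ⟨le_rfl, hn⟩
  · exact mem_Icc.2 ⟨hp.one_lt.le, hmn⟩
  · exact mem_Icc.2 ⟨Nat.one_le_pow _ _ hp.pos, hmn⟩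

theorem filter_dvd_primesAndSquares_subset {n p : ℕ} (hp : p.Prime) :
    {m ∈ primesAndSquares n | p ∣ m} ⊆ {p, p ^ 2} := by
  intro m hm
  obtain ⟨hm, hpm⟩ := mem_filter.1 hm
  simp only [mem_insert, mem_singleton]
  rcases mem_primesAndSquares.1 hm with rfl | ⟨hq | ⟨q, hq, rfl⟩, -⟩
  · exact absurd (Nat.eq_one_of_dvd_one hpm) hp.ne_one
  · exact Or.inl ((Nat.prime_dvd_prime_iff_eq hp hq).1 hpm).symm
  · exact Or.inr (by rw [(Nat.prime_dvd_prime_iff_eq hp hq).1 (hp.dvd_of_dvd_pow hpm)])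

theorem filter_minFac_eq_primesAndSquares {n p : ℕ} (hp : p.Prime) :
    {m ∈ primesAndSquares n | m.minFac = p} = {m ∈ ({p, p ^ 2} : Finset ℕ) | m ≤ n} := by
  ext m
  simp only [mem_filter, mem_primesAndSquares, mem_insert, mem_singleton]
  constructor
  · rintro ⟨rfl | ⟨hq | ⟨q, hq, rfl⟩, hmn⟩, rfl⟩
    · exact absurd Nat.minFac_one hp.ne_one
    · exact ⟨Or.inl hq.minFac_eq.symm, hmn⟩
    · exact ⟨Or.inr (by rw [hq.pow_minFac two_ne_zero]), hmn⟩
  · rintro ⟨rfl | rfl, hmn⟩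
    · exact ⟨Or.inr ⟨Or.inl hp, hmn⟩, hp.minFac_eq⟩
    · exact ⟨Or.inr ⟨Or.inr ⟨p, hp, rfl⟩, hmn⟩, hp.pow_minFac two_ne_zero⟩

/-- An `(n, k)`-shelf is a `B` with `IsShelf k B` and `B ⊆ Icc 1 n`. -/
def IsShelf (k : ℕ) (B : Finset ℕ) : Prop :=
  ∀ p : ℕ, p.Prime → #{a ∈ B | p ∣ a} ≤ k

theorem isShelf_primesAndSquares (n : ℕ) : IsShelf 2 (primesAndSquares n) := fun _ hp =>
  (card_le_card (filter_dvd_primesAndSquares_subset hp)).trans card_le_two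

theorem IsShelf.card_filter_minFac_eq_le {n : ℕ} {B : Finset ℕ} (hB : IsShelf 2 B)
    (hBn : B ⊆ Icc 1 n) {p : ℕ} (hp : p.Prime) :
    #{m ∈ B | m.minFac = p} ≤ #{m ∈ ({p, p ^ 2} : Finset ℕ) | m ≤ n} := by
  by_cases hpn : p ^ 2 ≤ n
  · have hp_ne : p ≠ p ^ 2 := (lt_self_pow₀ hp.one_lt one_lt_two).ne
    have hpn' : p ≤ n := (Nat.le_self_pow two_ne_zero p).trans hpn
    calc #{m ∈ B | m.minFac = p} ≤ #{m ∈ B | p ∣ m} :=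
          card_le_card <| monotone_filter_right B fun m _ hm => hm ▸ m.minFac_dvd
      _ ≤ 2 := hB p hp
      _ = #{m ∈ ({p, p ^ 2} : Finset ℕ) | m ≤ n} := by
          rw [filter_true_of_mem (by simp [hpn, hpn']), card_pair hp_ne]
  · refine card_le_card fun m hm => ?_
    obtain ⟨hmB, rfl⟩ := mem_filter.1 hm
    have ⟨hm1, hmn⟩ := mem_Icc.1 (hBn hmB)
    have hm_eq : m = m.minFac := by
      by_contra h
      exact hpn ((Nat.minFac_sq_le_self hm1 fun hm => h hm.minFac_eq.symm).trans hmn)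
    simp only [mem_filter, mem_insert, mem_singleton]
    exact ⟨Or.inl hm_eq, hmn⟩

theorem IsShelf.card_le_card_primesAndSquares {n : ℕ} {B : Finset ℕ} (hB : IsShelf 2 B)
    (hBn : B ⊆ Icc 1 n) : #B ≤ #(primesAndSquares n) := by
  refine card_le_card_of_card_fiber_le (f := Nat.minFac) fun b _ => ?_
  by_cases hb : b = 1
  · subst hb
    refine card_le_card fun m hm => ?_
    simp only [mem_filter, Nat.minFac_one, Nat.minFac_eq_one_iff] at hm ⊢
    exact ⟨mem_primesAndSquares.2 (Or.inl hm.2), hm.2⟩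
  · rw [filter_minFac_eq_primesAndSquares (Nat.minFac_prime hb)]
    exact hB.card_filter_minFac_eq_le hBn (Nat.minFac_prime hb)

/-- `{1} ∪ {p prime : p ≤ n} ∪ {p² : p prime, p² ≤ n}` is a maximum `(n,2)`-shelf. -/
theorem primes_and_squares_maximum_shelf_two (n : ℕ) (hn : 1 ≤ n) :
    let A : Finset ℕ := {1} ∪ ((Finset.Icc 1 n).filter (fun p => p.Prime)) ∪
      ((Finset.Icc 1 n).filter (fun m => ∃ p : ℕ, p.Prime ∧ m = p ^ 2))
    A ⊆ Finset.Icc 1 n ∧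
    (∀ p : ℕ, p.Prime → (A.filter (fun a => p ∣ a)).card ≤ 2) ∧
    (∀ B : Finset ℕ, B ⊆ Finset.Icc 1 n →
      (∀ p : ℕ, p.Prime → (B.filter (fun a => p ∣ a)).card ≤ 2) →
      B.card ≤ A.card) :=
  ⟨primesAndSquares_subset_Icc hn, isShelf_primesAndSquares n,
    fun _ hBn hB => IsShelf.card_le_card_primesAndSquares hB hBn⟩
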